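/- arXiv:1404.0452 — 2 statements merged into one kernel-verified Lean document; each statement's English description precedes it below -/
import Mathlib

section
/- Let m ≥ 2 be even and let A be a real m-th order n-dimensional symmetric tensor. Then A is positive definite if and only if all of its H-eigenvalues are positive, i.e., A xᵐ > 0 for all nonzero x ∈ ℝⁿ if and only if every λ ∈ ℝ admitting a nonzero x ∈ ℝⁿ with A x^{m-1} = λ x^{[m-1]} satisfies λ > 0. -/
open Finset

variable {m n : ℕ}

/-- The homogeneous form `A xᵐ` of an `m`-th order `n`-dimensional tensor `A`. -/
noncomputable def tApply (A : (Fin m → Fin n) → ℝ) (x : Fin n → ℝ) : ℝ :=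
  ∑ f : Fin m → Fin n, A f * ∏ j, x (f j)

/-- A tensor is symmetric if its entries are invariant under any permutation of the indices. -/
def IsSymmT (A : (Fin m → Fin n) → ℝ) : Prop :=
  ∀ (σ : Equiv.Perm (Fin m)) (f : Fin m → Fin n), A (f ∘ σ) = A f

/-- The `i`-th component of the vector `A x^{m-1}`:
`Σ_{i₂,…,i_m} a_{i i₂ ⋯ i_m} x_{i₂} ⋯ x_{i_m}`. -/
noncomputable def tVec [NeZero m] (A : (Fin m → Fin n) → ℝ) (x : Fin n → ℝ) (i : Fin n) : ℝ :=
  ∑ f ∈ univ.filter (fun f : Fin m → Fin n => f 0 = i),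
    A f * ∏ j ∈ univ.erase (0 : Fin m), x (f j)

/-- The `i`-th component of the vector `A x^{m-1}` for complex `x`. -/
noncomputable def tVecC [NeZero m] (A : (Fin m → Fin n) → ℝ) (x : Fin n → ℂ) (i : Fin n) : ℂ :=
  ∑ f ∈ univ.filter (fun f : Fin m → Fin n => f 0 = i),
    (A f : ℂ) * ∏ j ∈ univ.erase (0 : Fin m), x (f j)

/-- The sum of the absolute values of the off-diagonal entries in the `i`-th row of `A`. -/
noncomputable def offDiagSum [NeZero m] (A : (Fin m → Fin n) → ℝ) (i : Fin n) : ℝ :=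
  ∑ f ∈ univ.filter (fun f : Fin m → Fin n => f 0 = i ∧ f ≠ (fun _ => i)), |A f|

/-- A diagonally dominated tensor. -/
def DiagDom [NeZero m] (A : (Fin m → Fin n) → ℝ) : Prop :=
  ∀ i : Fin n, offDiagSum A i ≤ A (fun _ => i)

/-- A strictly diagonally dominated tensor. -/
def StrictDiagDom [NeZero m] (A : (Fin m → Fin n) → ℝ) : Prop :=
  ∀ i : Fin n, offDiagSum A i < A (fun _ => i)

/-- The sum of all the entries in the `i`-th row of `A`. -/
noncomputable def rowSum [NeZero m] (A : (Fin m → Fin n) → ℝ) (i : Fin n) : ℝ :=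
  ∑ f ∈ univ.filter (fun f : Fin m → Fin n => f 0 = i), A f

/-- A B₀ tensor. -/
def IsB0 [NeZero m] (A : (Fin m → Fin n) → ℝ) : Prop :=
  ∀ i : Fin n, 0 ≤ rowSum A i ∧
    ∀ f : Fin m → Fin n, f 0 = i → f ≠ (fun _ => i) →
      A f ≤ (1 / (n : ℝ) ^ (m - 1)) * rowSum A i

/-- A B tensor. -/
def IsB [NeZero m] (A : (Fin m → Fin n) → ℝ) : Prop :=
  ∀ i : Fin n, 0 < rowSum A i ∧
    ∀ f : Fin m → Fin n, f 0 = i → f ≠ (fun _ => i) →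
      A f < (1 / (n : ℝ) ^ (m - 1)) * rowSum A i

/-- A Z tensor: all off-diagonal entries are non-positive. -/
def IsZ [NeZero m] (A : (Fin m → Fin n) → ℝ) : Prop :=
  ∀ (i : Fin n) (f : Fin m → Fin n), f 0 = i → f ≠ (fun _ => i) → A f ≤ 0

/-- The partially all one tensor `E^J`. -/
noncomputable def allOne (m : ℕ) {n : ℕ} (J : Finset (Fin n)) : (Fin m → Fin n) → ℝ :=
  fun f => if ∀ j, f j ∈ J then 1 else 0

/-- `Ĵ(B)`: the set of rows of `B` with at least one positive off-diagonal entry. -/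
noncomputable def hatJ [NeZero m] (B : (Fin m → Fin n) → ℝ) : Finset (Fin n) :=
  univ.filter fun i => ∃ f : Fin m → Fin n, f 0 = i ∧ f ≠ (fun _ => i) ∧ 0 < B f

/-!
Euler's identity `A xᵐ = Σᵢ xᵢ (A x^{m-1})ᵢ` shows that on an H-eigenpair `A xᵐ = λ Σᵢ xᵢᵐ`, so
positive definiteness forces `λ > 0`. Conversely, for even `m` the level set `Σᵢ xᵢᵐ = 1` is
compact, and the gradient of `A xᵐ` is `m A x^{m-1}` when `A` is symmetric, so a minimiser of
`A xᵐ` on it is, by Lagrange multipliers, an H-eigenvector whose eigenvalue is the minimum value.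
That minimum is therefore positive, and homogeneity extends positivity to every nonzero `x`.
-/

section PowerSum

variable {ι : Type*} [Fintype ι]

theorem sum_smul_proj_apply_single [DecidableEq ι] (c : ι → ℝ) (i : ι) :
    (∑ j, c j • (ContinuousLinearMap.proj j : (ι → ℝ) →L[ℝ] ℝ)) (Pi.single i 1) = c i := by
  simp [Pi.single_apply]

noncomputable def powerSum (m : ℕ) (x : ι → ℝ) : ℝ :=
  ∑ i, x i ^ m

theorem continuous_powerSum (m : ℕ) : Continuous (powerSum (ι := ι) m) :=
  continuous_finsetSum _ fun i _ => (continuous_apply i).pow m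

theorem powerSum_smul (m : ℕ) (c : ℝ) (x : ι → ℝ) :
    powerSum m (c • x) = c ^ m * powerSum m x := by
  simp [powerSum, mul_pow, Finset.mul_sum]

theorem powerSum_pos (hm : Even m) {x : ι → ℝ} (hx : x ≠ 0) :
    0 < powerSum m x := by
  obtain ⟨i, hi⟩ := Function.ne_iff.mp hx
  exact Finset.sum_pos' (fun j _ => hm.pow_nonneg _) ⟨i, mem_univ i, hm.pow_pos hi⟩

theorem exists_eq_smul_of_powerSum_pos (hm0 : m ≠ 0) {x : ι → ℝ}
    (hx : 0 < powerSum m x) : ∃ c : ℝ, 0 < c ∧ ∃ y, powerSum m y = 1 ∧ x = c • y := by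
  set c := powerSum m x ^ (m⁻¹ : ℝ)
  have hc : 0 < c := Real.rpow_pos_of_pos hx _
  have hcm : c ^ m = powerSum m x := by
    rw [← Real.rpow_natCast, ← Real.rpow_mul hx.le, inv_mul_cancel₀ (by exact_mod_cast hm0),
      Real.rpow_one]
  refine ⟨c, hc, c⁻¹ • x, ?_, by rw [smul_smul, mul_inv_cancel₀ hc.ne', one_smul]⟩
  rw [powerSum_smul, inv_pow, hcm, inv_mul_cancel₀ hx.ne']

theorem ne_zero_of_powerSum_eq_one (hm0 : m ≠ 0) {x : ι → ℝ} (hx : powerSum m x = 1) :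
    x ≠ 0 := by
  rintro rfl
  simp [powerSum, hm0] at hx

theorem isCompact_powerSum_eq_one (hm : Even m) (hm0 : m ≠ 0) :
    IsCompact {x : ι → ℝ | powerSum m x = 1} := by
  refine Metric.isCompact_of_isClosed_isBounded
    (isClosed_singleton.preimage (continuous_powerSum m))
    ((Metric.isBounded_closedBall (x := (0 : ι → ℝ)) (r := 1)).subset fun x hx => ?_)
  rw [Metric.mem_closedBall, dist_zero_right, pi_norm_le_iff_of_nonneg zero_le_one]
  intro i
  rw [Real.norm_eq_abs, ← pow_le_one_iff_of_nonneg (abs_nonneg _) hm0, hm.pow_abs]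
  exact hx ▸ Finset.single_le_sum (f := fun j => x j ^ m) (fun j _ => hm.pow_nonneg _)
    (mem_univ i)

theorem hasStrictFDerivAt_powerSum (m : ℕ) (x : ι → ℝ) :
    HasStrictFDerivAt (powerSum m)
      (∑ i, ((m : ℝ) * x i ^ (m - 1)) • (ContinuousLinearMap.proj i : (ι → ℝ) →L[ℝ] ℝ)) x :=
  HasStrictFDerivAt.fun_sum fun i _ =>
    (hasStrictDerivAt_pow m (x i)).comp_hasStrictFDerivAt x (hasStrictFDerivAt_apply i x)

end PowerSum

section Tensor

variable (A : (Fin m → Fin n) → ℝ)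

theorem continuous_tApply : Continuous (tApply A) :=
  continuous_finsetSum _ fun f _ =>
    continuous_const.mul (continuous_finsetProd _ fun j _ => continuous_apply (f j))

theorem tApply_smul (c : ℝ) (x : Fin n → ℝ) : tApply A (c • x) = c ^ m * tApply A x := by
  simp only [tApply, Finset.mul_sum, Pi.smul_apply, smul_eq_mul, Finset.prod_mul_distrib,
    Finset.prod_const, Finset.card_univ, Fintype.card_fin]
  exact Finset.sum_congr rfl fun f _ => by ring

variable [NeZero m]

theorem tApply_eq_sum_mul_tVec (x : Fin n → ℝ) : tApply A x = ∑ i, x i * tVec A x i := by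
  rw [tApply, ← Finset.sum_fiberwise_of_maps_to (g := fun f : Fin m → Fin n => f 0)
    (fun f _ => mem_univ (f 0))]
  refine Finset.sum_congr rfl fun i _ => ?_
  rw [tVec, Finset.mul_sum]
  refine Finset.sum_congr rfl fun f hf => ?_
  rw [← Finset.mul_prod_erase univ _ (mem_univ 0), (Finset.mem_filter.mp hf).2]
  ring

theorem tApply_eq_mul_powerSum_of_tVec_eq {x : Fin n → ℝ} {lam : ℝ}
    (heig : ∀ i, tVec A x i = lam * x i ^ (m - 1)) : tApply A x = lam * powerSum m x := by
  rw [tApply_eq_sum_mul_tVec, powerSum, Finset.mul_sum]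
  refine Finset.sum_congr rfl fun i _ => ?_
  rw [heig, mul_left_comm, ← pow_succ', Nat.sub_add_cancel NeZero.one_le]

variable {A}

theorem sum_filter_apply_eq_tVec (hA : IsSymmT A) (x : Fin n → ℝ) (i : Fin n) (k : Fin m) :
    ∑ f ∈ univ.filter (fun f : Fin m → Fin n => f k = i),
      A f * ∏ j ∈ univ.erase k, x (f j) = tVec A x i := by
  refine Finset.sum_equiv ((Equiv.swap 0 k).arrowCongr (Equiv.refl _)) (by simp)
    fun f _ => ?_
  change _ = A (f ∘ Equiv.swap 0 k) * ∏ j ∈ univ.erase 0, x (f (Equiv.swap 0 k j))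
  rw [hA]
  congr 1
  exact Finset.prod_equiv (Equiv.swap 0 k) (by simp [Equiv.swap_apply_eq_iff]) (by simp)

theorem hasStrictFDerivAt_tApply (hA : IsSymmT A) (x : Fin n → ℝ) :
    HasStrictFDerivAt (tApply A)
      (∑ i, ((m : ℝ) * tVec A x i) • (ContinuousLinearMap.proj i : (Fin n → ℝ) →L[ℝ] ℝ)) x := by
  have hterm : ∀ f : Fin m → Fin n, HasStrictFDerivAt (fun y : Fin n → ℝ => A f * ∏ j, y (f j))
      (A f • ∑ k, (∏ j ∈ univ.erase k, x (f j)) •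
        (ContinuousLinearMap.proj (f k) : (Fin n → ℝ) →L[ℝ] ℝ)) x := fun f =>
    (HasStrictFDerivAt.finsetProd fun j _ => hasStrictFDerivAt_apply (f j) x).const_mul (A f)
  refine (HasStrictFDerivAt.fun_sum fun f _ => hterm f).congr_fderiv ?_
  refine ContinuousLinearMap.coe_injective (LinearMap.pi_ext fun i c => ?_)
  simp only [ContinuousLinearMap.toLinearMap_sum, ContinuousLinearMap.toLinearMap_smul,
    ContinuousLinearMap.coe_proj, LinearMap.coe_sum, LinearMap.coe_smul, LinearMap.coe_proj,
    Finset.sum_apply, Pi.smul_apply, Function.eval, Pi.single_apply, smul_eq_mul, mul_ite,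
    mul_zero, sum_ite_eq', mem_univ, if_true]
  calc _ = ∑ k : Fin m, (∑ f ∈ univ.filter (fun f : Fin m → Fin n => f k = i),
        A f * ∏ j ∈ univ.erase k, x (f j)) * c := by
        simp only [Finset.mul_sum, mul_ite, mul_zero, Finset.sum_mul, Finset.sum_filter,
          ite_mul, zero_mul, mul_assoc]
        exact Finset.sum_comm
    _ = m * tVec A x i * c := by
        simp [sum_filter_apply_eq_tVec hA, mul_assoc]

theorem tVec_eq_tApply_mul_of_isMinOn (hA : IsSymmT A) (hm : Even m) {z : Fin n → ℝ}
    (hz : powerSum m z = 1) (hmin : IsMinOn (tApply A) {x | powerSum m x = 1} z) (i : Fin n) :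
    tVec A z i = tApply A z * z i ^ (m - 1) := by
  have hm0 : (m : ℝ) ≠ 0 := Nat.cast_ne_zero.mpr (NeZero.ne m)
  have hextr : IsLocalExtrOn (tApply A) {x | powerSum m x = powerSum m z} z := by
    rw [hz]
    exact hmin.localize.isExtr
  obtain ⟨a, b, hab, hlagrange⟩ := hextr.exists_multipliers_of_hasStrictFDerivAt_1d
    (hasStrictFDerivAt_powerSum m z) (hasStrictFDerivAt_tApply hA z)
  have hcoord : ∀ i, a * z i ^ (m - 1) + b * tVec A z i = 0 := fun i => by
    have h := congrArg (· (Pi.single i 1)) hlagrange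
    simp only [add_apply, smul_apply, sum_smul_proj_apply_single, smul_eq_mul, zero_apply] at h
    exact mul_left_cancel₀ hm0 (by linear_combination h)
  have hb : b ≠ 0 := by
    rintro rfl
    have ha : a ≠ 0 := by
      rintro rfl
      exact hab rfl
    have hm1 : m - 1 ≠ 0 := by
      obtain ⟨k, rfl⟩ := hm
      have := NeZero.ne (k + k)
      omega
    exact ne_zero_of_powerSum_eq_one (NeZero.ne m) hz
      (funext fun i => by simpa [ha, hm1] using hcoord i)
  have heig : ∀ i, tVec A z i = -a / b * z i ^ (m - 1) := fun i => by
    field_simp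
    linear_combination hcoord i
  rw [tApply_eq_mul_powerSum_of_tVec_eq A heig, hz, mul_one, heig]

end Tensor

theorem pd_iff_all_H_eigenvalues_pos_general
    {m n : ℕ} [NeZero m] (hmeven : Even m)
    (A : (Fin m → Fin n) → ℝ) (hA : IsSymmT A) :
    (∀ x : Fin n → ℝ, x ≠ 0 → 0 < tApply A x) ↔
      ∀ (lam : ℝ) (x : Fin n → ℝ), x ≠ 0 →
        (∀ i : Fin n, tVec A x i = lam * x i ^ (m - 1)) → 0 < lam := by
  have hm0 : m ≠ 0 := NeZero.ne m
  constructor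
  · intro hpd lam x hx heig
    have h := tApply_eq_mul_powerSum_of_tVec_eq A heig ▸ hpd x hx
    exact (mul_pos_iff_of_pos_right (powerSum_pos hmeven hx)).mp h
  · intro heig x hx
    obtain ⟨c, hc, y, hy, rfl⟩ := exists_eq_smul_of_powerSum_pos hm0 (powerSum_pos hmeven hx)
    obtain ⟨z, hz, hmin⟩ := (isCompact_powerSum_eq_one hmeven hm0).exists_isMinOn ⟨y, hy⟩
      (continuous_tApply A).continuousOn
    have hlam := heig _ z (ne_zero_of_powerSum_eq_one hm0 hz)
      (tVec_eq_tApply_mul_of_isMinOn hA hmeven hz hmin)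
    rw [tApply_smul]
    exact mul_pos (pow_pos hc m) (hlam.trans_le (hmin hy))

/-- An even order real symmetric tensor is positive definite iff all of its
H-eigenvalues are positive. -/
theorem pd_iff_all_H_eigenvalues_pos
    {m n : ℕ} [NeZero m] (hm : 2 ≤ m) (hmeven : Even m) (hn : 1 ≤ n)
    (A : (Fin m → Fin n) → ℝ) (hA : IsSymmT A) :
    (∀ x : Fin n → ℝ, x ≠ 0 → 0 < tApply A x) ↔
      ∀ (lam : ℝ) (x : Fin n → ℝ), x ≠ 0 →
        (∀ i : Fin n, tVec A x i = lam * x i ^ (m - 1)) → 0 < lam :=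
  pd_iff_all_H_eigenvalues_pos_general hmeven A hA
end

section
/- Let m ≥ 2 be even and let B be a real m-th order n-dimensional symmetric B tensor. Then every H-eigenvalue of B is positive: if λ ∈ ℝ and x ∈ ℝⁿ is nonzero with B x^{m-1} = λ x^{[m-1]}, then λ > 0. -/
open Finset

variable {m n : ℕ}

section AuxLemmas

variable {m n : ℕ}

lemma isConst_iff [NeZero m] {f : Fin m → Fin n} :
    (f = fun _ => f 0) ↔ ∀ j k : Fin m, f j = f k := by
  constructor
  · intro h j k
    have hj := congrFun h j
    have hk := congrFun h k
    rw [hj, hk]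
  · intro h; funext j; exact h j 0

lemma comp_const_iff [NeZero m] (σ : Equiv.Perm (Fin m)) (f : Fin m → Fin n) :
    ((f ∘ σ) = fun _ => (f ∘ σ) 0) ↔ (f = fun _ => f 0) := by
  rw [isConst_iff, isConst_iff]
  constructor
  · intro h j k
    simpa using h (σ.symm j) (σ.symm k)
  · intro h j k
    exact h _ _

lemma sum_comp_perm (σ : Equiv.Perm (Fin m)) (F : (Fin m → Fin n) → ℝ) :
    ∑ f : Fin m → Fin n, F (f ∘ σ) = ∑ f : Fin m → Fin n, F f := by
  refine Fintype.sum_bijective (fun f : Fin m → Fin n => f ∘ σ) ?_ _ _ (fun f => rfl)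
  have : (fun f : Fin m → Fin n => f ∘ σ) = (Equiv.arrowCongr σ.symm (Equiv.refl (Fin n))) := by
    funext f; rfl
  rw [this]
  exact (Equiv.arrowCongr σ.symm (Equiv.refl (Fin n))).bijective

lemma prod_abs_le_amgm {m : ℕ} [NeZero m] (z : Fin m → ℝ) :
    ∏ j, |z j| ≤ (1 / (m : ℝ)) * ∑ j, |z j| ^ m := by
  have hm0 : (0 : ℝ) < m := by
    have := Nat.pos_of_ne_zero (NeZero.ne m); exact_mod_cast this
  have h := Real.geom_mean_le_arith_mean_weighted Finset.univ (fun _ : Fin m => 1 / (m : ℝ))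
    (fun j => |z j| ^ m) (fun i _ => by positivity)
    (by rw [Finset.sum_const, Finset.card_univ, Fintype.card_fin, nsmul_eq_mul]; field_simp) (fun i _ => by positivity)
  calc ∏ j, |z j| = ∏ j, ((|z j| ^ m) ^ ((1 : ℝ) / (m : ℝ))) := by
        refine Finset.prod_congr rfl fun j _ => ?_
        rw [← Real.rpow_natCast |z j| m, ← Real.rpow_mul (abs_nonneg _), mul_one_div,
          div_self (ne_of_gt hm0), Real.rpow_one]
    _ ≤ ∑ j, (1 / (m : ℝ)) * |z j| ^ m := h
    _ = (1 / (m : ℝ)) * ∑ j, |z j| ^ m := by rw [Finset.mul_sum]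

lemma card_row {m n : ℕ} [NeZero m] (i : Fin n) :
    (univ.filter (fun f : Fin m → Fin n => f 0 = i)).card = n ^ (m - 1) := by
  have e : {f : Fin m → Fin n // f 0 = i} ≃ ({j : Fin m // j ≠ 0} → Fin n) :=
    { toFun := fun f j => f.1 j.1
      invFun := fun g => ⟨fun j => if h : j = 0 then i else g ⟨j, h⟩, by simp⟩
      left_inv := by
        intro f
        apply Subtype.ext
        funext j
        dsimp only
        split
        · rename_i h; rw [h]; exact f.2.symm
        · rfl
      right_inv := by
        intro g
        funext j
        dsimp only
        rw [dif_neg j.2] }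
  rw [← Fintype.card_subtype]
  rw [Fintype.card_congr e, Fintype.card_fun]
  congr 1
  · exact Fintype.card_fin n
  · rw [Fintype.card_subtype_compl, Fintype.card_fin, Fintype.card_subtype_eq]

lemma tApply_eq_sum_tVec [NeZero m] (A : (Fin m → Fin n) → ℝ) (x : Fin n → ℝ) :
    tApply A x = ∑ i, x i * tVec A x i := by
  rw [tApply, ← Finset.sum_fiberwise univ (fun f : Fin m → Fin n => f 0)
    (fun f => A f * ∏ j, x (f j))]
  refine Finset.sum_congr rfl fun i _ => ?_
  rw [tVec, Finset.mul_sum]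
  refine Finset.sum_congr rfl fun f hf => ?_
  have h0 : f 0 = i := (Finset.mem_filter.1 hf).2
  rw [← Finset.mul_prod_erase univ (fun j => x (f j)) (Finset.mem_univ 0)]
  simp only [h0]
  ring

lemma tApply_sub (A C : (Fin m → Fin n) → ℝ) (h : ℝ) (x : Fin n → ℝ) :
    tApply (fun f => A f - h * C f) x = tApply A x - h * tApply C x := by
  simp only [tApply, sub_mul, Finset.sum_sub_distrib, Finset.mul_sum, mul_assoc]

lemma rowSum_sub [NeZero m] (A C : (Fin m → Fin n) → ℝ) (h : ℝ) (i : Fin n) :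
    rowSum (fun f => A f - h * C f) i = rowSum A i - h * rowSum C i := by
  simp only [rowSum, Finset.sum_sub_distrib, Finset.mul_sum]

lemma tApply_allOne [NeZero m] (J : Finset (Fin n)) (x : Fin n → ℝ) :
    tApply (allOne m J) x = (∑ i ∈ J, x i) ^ m := by
  rw [Finset.sum_pow']
  rw [tApply]
  simp only [allOne, ite_mul, one_mul, zero_mul]
  rw [← Finset.sum_filter]
  refine Finset.sum_congr ?_ fun _ _ => rfl
  ext f
  simp [Fintype.mem_piFinset]

end AuxLemmas


section MainLemmas

variable {m n : ℕ}

lemma base_pos [NeZero m] (hmeven : Even m)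
    (B : (Fin m → Fin n) → ℝ) (hsym : IsSymmT B) (hB : IsB B)
    (hZ : ∀ f : Fin m → Fin n, f ≠ (fun _ => f 0) → B f ≤ 0)
    (x : Fin n → ℝ) (hx : x ≠ 0) : 0 < tApply B x := by
  classical
  have hm0 : 0 < m := Nat.pos_of_ne_zero (NeZero.ne m)
  set S : Finset (Fin m → Fin n) :=
    univ.filter (fun f : Fin m → Fin n => ¬ f = fun _ => f 0) with hS
  -- split into diagonal and off-diagonal parts
  have hsplit : tApply B x =
      (∑ f ∈ univ.filter (fun f : Fin m → Fin n => f = fun _ => f 0), B f * ∏ j, x (f j))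
      + ∑ f ∈ S, B f * ∏ j, x (f j) := by
    rw [tApply, hS, Finset.sum_filter_add_sum_filter_not]
  -- diagonal part
  have hdiag : (∑ f ∈ univ.filter (fun f : Fin m → Fin n => f = fun _ => f 0),
      B f * ∏ j, x (f j)) = ∑ i : Fin n, B (fun _ => i) * |x i| ^ m := by
    refine Finset.sum_nbij' (fun f => f 0) (fun i => fun _ => i)
      (fun f _ => Finset.mem_univ _) (fun i _ => by simp) ?_ (fun i _ => rfl) ?_
    · intro f hf
      exact ((Finset.mem_filter.1 hf).2).symm
    · intro f hf
      have h := (Finset.mem_filter.1 hf).2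
      conv_lhs => rw [h]
      simp only [Finset.prod_const, Finset.card_univ, Fintype.card_fin]
      rw [Even.pow_abs hmeven]
  -- off-diagonal part bound
  have hoff : -(∑ i : Fin n, offDiagSum B i * |x i| ^ m) ≤ ∑ f ∈ S, B f * ∏ j, x (f j) := by
    have step1 : ∀ f ∈ S, -(|B f| * ((1 / (m : ℝ)) * ∑ j, |x (f j)| ^ m))
        ≤ B f * ∏ j, x (f j) := by
      intro f _
      have h1 : -(|B f| * ∏ j, |x (f j)|) ≤ B f * ∏ j, x (f j) := by
        have := neg_abs_le (B f * ∏ j, x (f j))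
        rwa [abs_mul, Finset.abs_prod] at this
      refine le_trans (neg_le_neg ?_) h1
      exact mul_le_mul_of_nonneg_left (prod_abs_le_amgm (fun j => x (f j))) (abs_nonneg _)
    calc -(∑ i : Fin n, offDiagSum B i * |x i| ^ m)
        = -(∑ f ∈ S, |B f| * ((1 / (m : ℝ)) * ∑ j, |x (f j)| ^ m)) := by
          congr 1
          -- rearrange and use symmetry
          have swap0 : ∀ j : Fin m, (∑ f ∈ S, |B f| * |x (f j)| ^ m)
              = ∑ f ∈ S, |B f| * |x (f 0)| ^ m := by
            intro j
            have hmemS : ∀ f : Fin m → Fin n, f ∈ S →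
                f ∘ (Equiv.swap (0 : Fin m) j) ∈ S := by
              intro f hf
              rw [hS, Finset.mem_filter] at hf ⊢
              exact ⟨Finset.mem_univ _, fun hc => hf.2 ((comp_const_iff _ f).mp hc)⟩
            have hinv : ∀ f : Fin m → Fin n,
                (f ∘ (Equiv.swap (0 : Fin m) j)) ∘ (Equiv.swap (0 : Fin m) j) = f := by
              intro f
              funext k
              simp [Function.comp, Equiv.swap_apply_self]
            refine Finset.sum_nbij' (fun f => f ∘ (Equiv.swap (0 : Fin m) j))
              (fun f => f ∘ (Equiv.swap (0 : Fin m) j)) hmemS hmemS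
              (fun f _ => hinv f) (fun f _ => hinv f) ?_
            intro f _
            rw [hsym (Equiv.swap (0 : Fin m) j) f]
            have h0j : (f ∘ (Equiv.swap (0 : Fin m) j)) 0 = f j := by
              simp [Function.comp, Equiv.swap_apply_left]
            show |B f| * |x (f j)| ^ m = |B f| * |x ((f ∘ (Equiv.swap (0 : Fin m) j)) 0)| ^ m
            rw [h0j]
          have hmne : (m : ℝ) ≠ 0 := by exact_mod_cast hm0.ne'
          have hT : (∑ f ∈ S, |B f| * ((1 / (m : ℝ)) * ∑ j, |x (f j)| ^ m))
              = ∑ f ∈ S, |B f| * |x (f 0)| ^ m := by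
            calc (∑ f ∈ S, |B f| * ((1 / (m : ℝ)) * ∑ j, |x (f j)| ^ m))
                = ∑ f ∈ S, ∑ j : Fin m, (1 / (m : ℝ)) * (|B f| * |x (f j)| ^ m) := by
                  refine Finset.sum_congr rfl fun f _ => ?_
                  rw [Finset.mul_sum, Finset.mul_sum]
                  refine Finset.sum_congr rfl fun j _ => ?_
                  ring
              _ = ∑ j : Fin m, ∑ f ∈ S, (1 / (m : ℝ)) * (|B f| * |x (f j)| ^ m) :=
                  Finset.sum_comm
              _ = ∑ j : Fin m, (1 / (m : ℝ)) * ∑ f ∈ S, |B f| * |x (f j)| ^ m := by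
                  refine Finset.sum_congr rfl fun j _ => ?_
                  rw [Finset.mul_sum]
              _ = ∑ _j : Fin m, (1 / (m : ℝ)) * ∑ f ∈ S, |B f| * |x (f 0)| ^ m := by
                  refine Finset.sum_congr rfl fun j _ => ?_
                  rw [swap0 j]
              _ = ∑ f ∈ S, |B f| * |x (f 0)| ^ m := by
                  rw [Finset.sum_const, Finset.card_univ, Fintype.card_fin, nsmul_eq_mul,
                    ← mul_assoc, mul_one_div, div_self hmne, one_mul]
          rw [hT]
          -- fiberwise over f 0
          rw [← Finset.sum_fiberwise S (fun f : Fin m → Fin n => f 0)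
            (fun f => |B f| * |x (f 0)| ^ m)]
          refine Finset.sum_congr rfl fun i _ => ?_
          rw [offDiagSum, Finset.sum_mul]
          have hfe : S.filter (fun f : Fin m → Fin n => f 0 = i)
              = univ.filter (fun f : Fin m → Fin n => f 0 = i ∧ f ≠ (fun _ => i)) := by
            rw [hS, Finset.filter_filter]
            refine Finset.filter_congr fun f _ => ?_
            constructor
            · rintro ⟨h1, h2⟩; exact ⟨h2, by rwa [h2] at h1⟩
            · rintro ⟨h2, h1⟩; exact ⟨by rwa [← h2] at h1, h2⟩
          rw [hfe]
          refine Finset.sum_congr rfl fun f hf => ?_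
          rw [(Finset.mem_filter.1 hf).2.1]
      _ ≤ ∑ f ∈ S, B f * ∏ j, x (f j) := by
          rw [neg_eq_neg_one_mul, Finset.mul_sum]
          refine Finset.sum_le_sum fun f hf => ?_
          have := step1 f hf
          linarith
  -- row sums
  have hrow : ∀ i : Fin n, B (fun _ => i) - offDiagSum B i = rowSum B i := by
    intro i
    have hsplit2 : rowSum B i =
        (∑ f ∈ (univ.filter (fun f : Fin m → Fin n => f 0 = i)).filter
          (fun f => f = fun _ => i), B f)
        + ∑ f ∈ (univ.filter (fun f : Fin m → Fin n => f 0 = i)).filter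
          (fun f => ¬ f = fun _ => i), B f := by
      rw [rowSum, Finset.sum_filter_add_sum_filter_not]
    have h1 : (univ.filter (fun f : Fin m → Fin n => f 0 = i)).filter
        (fun f => f = fun _ => i) = {fun _ => i} := by
      ext g
      simp only [Finset.mem_filter, Finset.mem_univ, true_and, Finset.mem_singleton]
      constructor
      · rintro ⟨_, h⟩; exact h
      · rintro rfl; exact ⟨rfl, rfl⟩
    have h2 : (∑ f ∈ (univ.filter (fun f : Fin m → Fin n => f 0 = i)).filter
        (fun f => ¬ f = fun _ => i), B f) = -(offDiagSum B i) := by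
      rw [offDiagSum, Finset.filter_filter, ← Finset.sum_neg_distrib]
      refine Finset.sum_congr rfl fun f hf => ?_
      have hf' := (Finset.mem_filter.1 hf).2
      have hle : B f ≤ 0 := by
        apply hZ
        rw [hf'.1]
        exact hf'.2
      rw [abs_of_nonpos hle, neg_neg]
    rw [hsplit2, h1, h2, Finset.sum_singleton]
    ring
  -- conclude
  have hfinal : (∑ i : Fin n, rowSum B i * |x i| ^ m) ≤ tApply B x := by
    rw [hsplit, hdiag]
    have : (∑ i : Fin n, rowSum B i * |x i| ^ m)
        = (∑ i : Fin n, B (fun _ => i) * |x i| ^ m)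
          - ∑ i : Fin n, offDiagSum B i * |x i| ^ m := by
      rw [← Finset.sum_sub_distrib]
      refine Finset.sum_congr rfl fun i _ => ?_
      rw [← hrow i]; ring
    rw [this]
    linarith
  refine lt_of_lt_of_le ?_ hfinal
  obtain ⟨i0, hi0⟩ : ∃ i, x i ≠ 0 := by
    by_contra h
    push_neg at h
    exact hx (funext h)
  refine Finset.sum_pos' (fun i _ => ?_) ⟨i0, Finset.mem_univ _, ?_⟩
  · have := (hB i).1
    positivity
  · have h1 := (hB i0).1
    have h2 : 0 < |x i0| ^ m := pow_pos (abs_pos.2 hi0) m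
    positivity

end MainLemmas


lemma tApply_pos_of_isB [NeZero m] (hmeven : Even m) (hn : 1 ≤ n) :
    ∀ N : ℕ, ∀ B : (Fin m → Fin n) → ℝ, IsSymmT B → IsB B →
      (univ.filter (fun f : Fin m → Fin n => f ≠ (fun _ => f 0) ∧ 0 < B f)).card ≤ N →
      ∀ x : Fin n → ℝ, x ≠ 0 → 0 < tApply B x := by
  intro N
  induction N with
  | zero =>
    intro B hsym hB hcard x hx
    refine base_pos hmeven B hsym hB ?_ x hx
    intro f hf
    by_contra hpos
    push_neg at hpos
    have hmem : f ∈ univ.filter (fun f : Fin m → Fin n => f ≠ (fun _ => f 0) ∧ 0 < B f) :=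
      Finset.mem_filter.2 ⟨Finset.mem_univ _, hf, hpos⟩
    have hc := Finset.card_pos.2 ⟨f, hmem⟩
    exact absurd (lt_of_lt_of_le hc hcard) (lt_irrefl 0)
  | succ N ih =>
    intro B hsym hB hcard x hx
    set S := univ.filter (fun f : Fin m → Fin n => f ≠ (fun _ => f 0) ∧ 0 < B f) with hSdef
    by_cases hle : S.card ≤ N
    · exact ih B hsym hB hle x hx
    have hne : S.Nonempty := by
      rw [← Finset.card_pos]
      exact Nat.pos_of_ne_zero fun h0 => hle (h0 ▸ Nat.zero_le N)
    obtain ⟨f₀, hf₀S, hmin⟩ := Finset.exists_min_image S B hne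
    have hf₀ := Finset.mem_filter.1 hf₀S
    set h := B f₀ with hh
    have hhpos : 0 < h := hf₀.2.2
    set J := hatJ B with hJ
    have hnpos : (0:ℝ) < (n : ℝ) ^ (m - 1) := by
      have : (0:ℝ) < (n:ℝ) := by exact_mod_cast hn
      positivity
    -- every positive off-diagonal entry has all its indices in J
    have hallJ : ∀ f : Fin m → Fin n, f ≠ (fun _ => f 0) → 0 < B f → ∀ j, f j ∈ J := by
      intro f hfc hfpos j
      rw [hJ, hatJ, Finset.mem_filter]
      have h0 : (f ∘ (Equiv.swap (0 : Fin m) j)) 0 = f j := by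
        simp [Function.comp, Equiv.swap_apply_left]
      refine ⟨Finset.mem_univ _, f ∘ (Equiv.swap (0 : Fin m) j), h0, ?_, ?_⟩
      · intro hc
        apply hfc
        apply (comp_const_iff (Equiv.swap (0 : Fin m) j) f).mp
        rw [h0, hc]
      · rw [hsym]; exact hfpos
    have hhrow : ∀ i ∈ J, h * (n : ℝ) ^ (m - 1) < rowSum B i := by
      intro i hi
      rw [hJ, hatJ, Finset.mem_filter] at hi
      obtain ⟨-, g, hg0, hgc, hgpos⟩ := hi
      have hgS : g ∈ S := Finset.mem_filter.2 ⟨Finset.mem_univ _,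
        (by rw [hg0]; exact hgc), hgpos⟩
      have h1 : h ≤ B g := hmin g hgS
      have h2 : B g < (1 / (n : ℝ) ^ (m - 1)) * rowSum B i := (hB i).2 g hg0 hgc
      have h3 : B g * (n:ℝ)^(m-1) < rowSum B i := by
        have := mul_lt_mul_of_pos_right h2 hnpos
        rwa [one_div, mul_comm ((n:ℝ)^(m-1))⁻¹ (rowSum B i), mul_assoc,
          inv_mul_cancel₀ hnpos.ne', mul_one] at this
      nlinarith
    set E := allOne m J with hE
    set B1 := fun f => B f - h * E f with hB1def
    have hsym1 : IsSymmT B1 := by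
      intro σ f
      rw [hB1def]
      dsimp only
      rw [hsym σ f]
      congr 2
      rw [hE, allOne]
      refine if_congr ?_ rfl rfl
      constructor
      · intro hha j; simpa using hha (σ.symm j)
      · intro hha j; exact hha _
    have hEnonneg : ∀ f, 0 ≤ E f := by
      intro f; rw [hE, allOne]; positivity
    have hEle1 : ∀ f, E f ≤ 1 := by
      intro f; rw [hE, allOne]; split <;> norm_num
    have hc0 : ∀ i : Fin n, 0 ≤ rowSum E i := by
      intro i; rw [rowSum]; exact Finset.sum_nonneg fun f _ => hEnonneg f
    have hcn : ∀ i : Fin n, rowSum E i ≤ (n:ℝ) ^ (m-1) := by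
      intro i
      rw [rowSum]
      calc ∑ f ∈ univ.filter (fun f : Fin m → Fin n => f 0 = i), E f
          ≤ ∑ _f ∈ univ.filter (fun f : Fin m → Fin n => f 0 = i), (1:ℝ) :=
            Finset.sum_le_sum fun f _ => hEle1 f
        _ = ((univ.filter (fun f : Fin m → Fin n => f 0 = i)).card : ℝ) := by simp
        _ = (n:ℝ)^(m-1) := by rw [card_row]; push_cast; ring
    have hcJ : ∀ i : Fin n, i ∉ J → rowSum E i = 0 := by
      intro i hi
      rw [rowSum]
      refine Finset.sum_eq_zero fun f hf => ?_
      rw [hE, allOne, if_neg]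
      intro hall
      exact hi ((Finset.mem_filter.1 hf).2 ▸ hall 0)
    have hrowB1 : ∀ i : Fin n, rowSum B1 i = rowSum B i - h * rowSum E i := by
      intro i; rw [hB1def]; exact rowSum_sub B E h i
    have hrow1 : ∀ i : Fin n, 0 < rowSum B1 i := by
      intro i
      rw [hrowB1 i]
      by_cases hi : i ∈ J
      · have h1 := hhrow i hi
        have h2 := hcn i
        have h3 := hc0 i
        nlinarith [mul_le_mul_of_nonneg_left (hcn i) hhpos.le]
      · rw [hcJ i hi]; simpa using (hB i).1
    have hB1isB : IsB B1 := by
      intro i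
      refine ⟨hrow1 i, ?_⟩
      intro f hf0 hfne
      rw [hrowB1 i]
      by_cases hall : ∀ j, f j ∈ J
      · have hEf : E f = 1 := by rw [hE, allOne, if_pos hall]
        have h2 := (hB i).2 f hf0 hfne
        show B f - h * E f < (1/(n:ℝ)^(m-1)) * (rowSum B i - h * rowSum E i)
        rw [hEf, mul_one, mul_sub]
        have hkey : (1/(n:ℝ)^(m-1)) * (h * rowSum E i) ≤ h := by
          calc (1/(n:ℝ)^(m-1)) * (h * rowSum E i)
              ≤ (1/(n:ℝ)^(m-1)) * (h * ((n:ℝ)^(m-1))) := by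
                refine mul_le_mul_of_nonneg_left ?_ (by positivity)
                exact mul_le_mul_of_nonneg_left (hcn i) hhpos.le
            _ = h := by field_simp
        linarith
      · have hEf : E f = 0 := by rw [hE, allOne, if_neg hall]
        have hBf : B f ≤ 0 := by
          by_contra hpos
          push_neg at hpos
          exact hall (hallJ f (by rw [hf0]; exact hfne) hpos)
        show B f - h * E f < (1/(n:ℝ)^(m-1)) * (rowSum B i - h * rowSum E i)
        rw [hEf, mul_zero, sub_zero]
        have hpos1 : 0 < rowSum B i - h * rowSum E i := by
          have := hrow1 i; rwa [hrowB1 i] at this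
        calc B f ≤ 0 := hBf
          _ < (1/(n:ℝ)^(m-1)) * (rowSum B i - h * rowSum E i) := by positivity
    have hSsub : univ.filter (fun f : Fin m → Fin n => f ≠ (fun _ => f 0) ∧ 0 < B1 f) ⊆ S := by
      intro f hf
      obtain ⟨-, hfc, hfpos⟩ := Finset.mem_filter.1 hf
      refine Finset.mem_filter.2 ⟨Finset.mem_univ _, hfc, ?_⟩
      have hEf := hEnonneg f
      have hle2 : B1 f ≤ B f := by
        rw [hB1def]; dsimp only; nlinarith
      linarith
    have hf0not : f₀ ∉ univ.filter (fun f : Fin m → Fin n => f ≠ (fun _ => f 0) ∧ 0 < B1 f) := by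
      intro hmem
      obtain ⟨-, -, hfpos⟩ := Finset.mem_filter.1 hmem
      have hEf : E f₀ = 1 := by
        rw [hE, allOne, if_pos (hallJ f₀ hf₀.2.1 hf₀.2.2)]
      have hz : B1 f₀ = 0 := by
        rw [hB1def]; dsimp only; rw [hEf, mul_one, ← hh]; ring
      rw [hz] at hfpos
      exact lt_irrefl 0 hfpos
    have hcard1 : (univ.filter (fun f : Fin m → Fin n => f ≠ (fun _ => f 0) ∧ 0 < B1 f)).card
        ≤ N := by
      have hss : univ.filter (fun f : Fin m → Fin n => f ≠ (fun _ => f 0) ∧ 0 < B1 f) ⊂ S :=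
        (Finset.ssubset_iff_of_subset hSsub).2 ⟨f₀, hf₀S, hf0not⟩
      exact Nat.lt_succ_iff.mp (lt_of_lt_of_le (Finset.card_lt_card hss) hcard)
    have hpos1 : 0 < tApply B1 x := ih B1 hsym1 hB1isB hcard1 x hx
    have happ : tApply B x = tApply B1 x + h * (∑ i ∈ J, x i) ^ m := by
      have hts : tApply B1 x = tApply B x - h * tApply E x := by
        rw [hB1def]; exact tApply_sub B E h x
      rw [hts, hE, tApply_allOne]
      ring
    rw [happ]
    have hnn : 0 ≤ h * (∑ i ∈ J, x i) ^ m :=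
      mul_nonneg hhpos.le (hmeven.pow_nonneg _)
    linarith

/-- every H-eigenvalue of an even order symmetric B tensor is positive. -/
theorem even_symmetric_b_tensor_H_eigenvalues_pos
    {m n : ℕ} [NeZero m] (hm : 2 ≤ m) (hmeven : Even m) (hn : 1 ≤ n)
    (B : (Fin m → Fin n) → ℝ) (hsym : IsSymmT B) (hB : IsB B)
    (lam : ℝ) (x : Fin n → ℝ) (hx : x ≠ 0)
    (heig : ∀ i : Fin n, tVec B x i = lam * x i ^ (m - 1)) :
    0 < lam := by
  have hpos : 0 < tApply B x :=
    tApply_pos_of_isB hmeven hn _ B hsym hB le_rfl x hx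
  have hm1 : m - 1 + 1 = m := Nat.sub_add_cancel (by omega)
  have hsum : tApply B x = lam * ∑ i, x i ^ m := by
    rw [tApply_eq_sum_tVec, Finset.mul_sum]
    refine Finset.sum_congr rfl fun i _ => ?_
    have hxp : x i ^ m = x i ^ (m - 1) * x i := by rw [← pow_succ, hm1]
    rw [heig i, hxp]
    ring
  obtain ⟨i0, hi0⟩ : ∃ i, x i ≠ 0 := by
    by_contra hc; push_neg at hc; exact hx (funext hc)
  have hS : 0 < ∑ i, x i ^ m := by
    refine Finset.sum_pos' (fun i _ => hmeven.pow_nonneg _) ⟨i0, Finset.mem_univ _, ?_⟩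
    exact hmeven.pow_pos hi0
  rw [hsum] at hpos
  by_contra hlam
  push_neg at hlam
  nlinarith
end
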